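/- Let δ be a smooth symmetric diagonal and α(u) = ∫₀ᵘ δ(t) dt. Then ∫₀¹ u·δ(u) du = α(1)/2 + 1/12 and ∫₀¹ α(u) du = α(1)/2 − 1/12. -/

import Mathlib

/-!
Rewritten, the symmetry identity says that `u ↦ δ u - u` is symmetric about `1/2`, so its
first moment is half its integral; with `∫₀¹ u² = 1/3` and `∫₀¹ u = 1/2` this gives the first
identity. For the second, integrating by parts against `u - 1` (Cauchy's formula for repeated
integration) gives `∫₀¹ α = ∫₀¹ (1 - u) δ u = α 1 - ∫₀¹ u δ u`.
-/

open MeasureTheory Set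

noncomputable section

/-- A smooth symmetric diagonal `δ` with (continuous) derivative `δ'`:
continuous, strictly increasing, 2-Lipschitz, `δ(0)=0`, `δ(1)=1`, `δ(t) ≤ t`,
satisfying the symmetry identity `δ(u) = 2u - 1 + δ(1-u)`, differentiable with
continuous derivative, and `0 < δ'(u) < 2` for all but finitely many `u`. -/
def SmoothSymDiagonal (δ δ' : ℝ → ℝ) : Prop :=
  ContinuousOn δ (Icc 0 1) ∧
  StrictMonoOn δ (Icc 0 1) ∧
  (∀ u ∈ Icc (0:ℝ) 1, ∀ v ∈ Icc (0:ℝ) 1, |δ u - δ v| ≤ 2 * |u - v|) ∧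
  δ 0 = 0 ∧ δ 1 = 1 ∧
  (∀ t ∈ Icc (0:ℝ) 1, δ t ∈ Icc (0:ℝ) 1 ∧ δ t ≤ t) ∧
  (∀ u ∈ Icc (0:ℝ) 1, δ u = 2 * u - 1 + δ (1 - u)) ∧
  (∀ u ∈ Icc (0:ℝ) 1, HasDerivWithinAt δ (δ' u) (Icc 0 1) u) ∧
  ContinuousOn δ' (Icc 0 1) ∧
  {u ∈ Icc (0:ℝ) 1 | ¬(0 < δ' u ∧ δ' u < 2)}.Finite

/-- `finv` is the inverse of the bijection `f : [0,1] → [0,1]`. -/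
def InverseOnUnitInterval (f finv : ℝ → ℝ) : Prop :=
  (∀ t ∈ Icc (0:ℝ) 1, finv t ∈ Icc (0:ℝ) 1) ∧
  (∀ t ∈ Icc (0:ℝ) 1, f (finv t) = t) ∧
  (∀ t ∈ Icc (0:ℝ) 1, finv (f t) = t)

open intervalIntegral
open scoped Interval

theorem integral_id_mul_of_symmetric {g : ℝ → ℝ} {a b : ℝ} (hg : IntervalIntegrable g volume a b)
    (hsymm : ∀ x ∈ [[a, b]], g (a + b - x) = g x) :
    ∫ x in a..b, x * g x = (a + b) / 2 * ∫ x in a..b, g x := by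
  have hreflect : ∫ x in a..b, x * g x = ∫ x in a..b, (a + b - x) * g x :=
    calc ∫ x in a..b, x * g x = ∫ x in a..b, (a + b - x) * g (a + b - x) := by
          rw [integral_comp_sub_left (fun x => x * g x), add_sub_cancel_right,
            add_sub_cancel_left]
      _ = ∫ x in a..b, (a + b - x) * g x := integral_congr fun x hx => by rw [hsymm x hx]
  have hxg : IntervalIntegrable (fun x => x * g x) volume a b :=
    hg.continuousOn_mul continuousOn_id
  have hsplit : ∫ x in a..b, (a + b - x) * g x
      = (a + b) * (∫ x in a..b, g x) - ∫ x in a..b, x * g x := by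
    simp_rw [sub_mul]
    rw [integral_sub (hg.const_mul _) hxg, intervalIntegral.integral_const_mul]
  linarith

theorem integral_primitive_eq_integral_sub_mul {f : ℝ → ℝ} {a b : ℝ}
    (hf : ContinuousOn f [[a, b]]) :
    ∫ x in a..b, (∫ t in a..x, f t) = ∫ x in a..b, (b - x) * f x := by
  have hF : ∀ x ∈ Ioo (min a b) (max a b), HasDerivAt (fun x => ∫ t in a..x, f t) (f x) x := by
    intro x hx
    exact integral_hasDerivAt_right
      (hf.mono (uIcc_subset_uIcc_left (Ioo_subset_Icc_self hx))).intervalIntegrable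
      ((hf.mono Ioo_subset_Icc_self).stronglyMeasurableAtFilter isOpen_Ioo x hx)
      (hf.continuousAt (Icc_mem_nhds hx.1 hx.2))
  have hparts := integral_mul_deriv_eq_deriv_mul_of_hasDerivAt (v := fun x => x - b)
    (continuousOn_primitive_interval (hf.integrableOn_compact isCompact_uIcc))
    (continuousOn_id.sub continuousOn_const) hF
    (fun x _ => (hasDerivAt_id x).sub_const b) hf.intervalIntegrable intervalIntegrable_const
  simp only [mul_one, sub_self, integral_same, zero_mul, mul_zero, zero_sub] at hparts
  rw [hparts, ← intervalIntegral.integral_neg]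
  exact integral_congr fun x _ => by ring

theorem integral_id_mul_of_diagonal_symmetry {δ : ℝ → ℝ} (hc : ContinuousOn δ (Icc 0 1))
    (hsymm : ∀ u ∈ Icc (0:ℝ) 1, δ u = 2 * u - 1 + δ (1 - u)) :
    ∫ u in (0:ℝ)..1, u * δ u = (∫ u in (0:ℝ)..1, δ u) / 2 + 1 / 12 := by
  rw [← uIcc_of_le zero_le_one] at hc hsymm
  have hδ : IntervalIntegrable δ volume 0 1 := hc.intervalIntegrable
  have hid : IntervalIntegrable (fun u : ℝ => u) volume 0 1 := intervalIntegrable_id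
  have hkey := integral_id_mul_of_symmetric (g := fun u => δ u - u) (hδ.sub hid) fun u hu => by
    simp only [zero_add]; linarith [hsymm u hu]
  simp only [mul_sub, ← pow_two] at hkey
  rw [integral_sub (hδ.continuousOn_mul (continuousOn_id' _)) (intervalIntegrable_pow 2),
    integral_sub hδ hid, integral_pow, integral_id] at hkey
  linarith

theorem integral_identities_delta (δ δ' : ℝ → ℝ) (hδ : SmoothSymDiagonal δ δ')
    (α : ℝ → ℝ) (hα : ∀ u : ℝ, α u = ∫ t in (0:ℝ)..u, δ t) :
    (∫ u in (0:ℝ)..1, u * δ u) = α 1 / 2 + 1/12 ∧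
    (∫ u in (0:ℝ)..1, α u) = α 1 / 2 - 1/12 := by
  obtain ⟨hc, -, -, -, -, -, hsymm, -⟩ := hδ
  obtain rfl : α = fun u => ∫ t in (0:ℝ)..u, δ t := funext hα
  have hmoment := integral_id_mul_of_diagonal_symmetry hc hsymm
  rw [← uIcc_of_le zero_le_one] at hc
  have hsplit : ∫ u in (0:ℝ)..1, (1 - u) * δ u
      = (∫ u in (0:ℝ)..1, δ u) - ∫ u in (0:ℝ)..1, u * δ u := by
    simp_rw [sub_mul, one_mul]
    exact integral_sub hc.intervalIntegrable
      (hc.intervalIntegrable.continuousOn_mul (continuousOn_id' _))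
  refine ⟨hmoment, ?_⟩
  rw [integral_primitive_eq_integral_sub_mul hc, hsplit, hmoment]
  ring
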